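/- Let n be a positive integer, let A and B be diagonal positive definite real n×n matrices, and let a, b ∈ ℝⁿ. For λ ∈ [0,1] define m_λ = (λA + (1−λ)B)⁻¹(λA a + (1−λ)B b). If for some λ̃ ∈ [0,1] the point m_{λ̃} lies outside the ellipsoid E(A, a), i.e., ‖m_{λ̃} − a‖_A > 1, then for every λ ∈ [0, λ̃] the point m_λ also lies outside E(A, a): ‖m_λ − a‖_A > 1. -/

import Mathlib

open Matrix

/-- The path point `m_λ = (λA + (1-λ)B)⁻¹ (λA a + (1-λ)B b)`. -/
noncomputable def mPath {n : ℕ} (A B : Matrix (Fin n) (Fin n) ℝ) (a b : Fin n → ℝ)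
    (lam : ℝ) : Fin n → ℝ :=
  (lam • A + (1 - lam) • B)⁻¹ *ᵥ (lam • (A *ᵥ a) + (1 - lam) • (B *ᵥ b))

/-- The norm `‖w‖_M = √(wᵀ M w)`. -/
noncomputable def matNorm {n : ℕ} (M : Matrix (Fin n) (Fin n) ℝ) (w : Fin n → ℝ) : ℝ :=
  Real.sqrt (w ⬝ᵥ (M *ᵥ w))

/-- The ellipsoid `E(M, m) = {x | ‖x - m‖_M ≤ 1}`. -/
noncomputable def ellipsoid {n : ℕ} (M : Matrix (Fin n) (Fin n) ℝ) (m : Fin n → ℝ) :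
    Set (Fin n → ℝ) :=
  {x | matNorm M (x - m) ≤ 1}

/-!
For diagonal `A = diag α` and `B = diag β` the path decouples into coordinates:
`(m_λ - a)_i = w_i(λ) (b_i - a_i)` with `w_i(λ) = (1-λ)β_i / (λα_i + (1-λ)β_i)`
(`pathWeight α_i β_i λ`).
Each weight `w_i` is nonnegative and decreasing on `[0, 1]`, so every coordinate of `m_λ - a`
shrinks in absolute value as `λ` grows, and so does the diagonal norm `‖m_λ - a‖_A`.
-/

noncomputable def pathWeight (α β t : ℝ) : ℝ :=
  (1 - t) * β / (t * α + (1 - t) * β)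

section PathWeight

variable {α β : ℝ}

lemma convex_combination_pos (hα : 0 < α) (hβ : 0 < β) {t : ℝ}
    (ht : t ∈ Set.Icc (0 : ℝ) 1) :
    0 < t * α + (1 - t) * β := by
  obtain ⟨ht0, ht1⟩ := ht
  rcases ht0.eq_or_lt with rfl | ht0
  · simpa using hβ
  · nlinarith [mul_pos ht0 hα, mul_nonneg (sub_nonneg.2 ht1) hβ.le]

lemma pathWeight_nonneg (hα : 0 < α) (hβ : 0 < β) {t : ℝ} (ht : t ∈ Set.Icc (0 : ℝ) 1) :
    0 ≤ pathWeight α β t :=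
  div_nonneg (mul_nonneg (sub_nonneg.2 ht.2) hβ.le) (convex_combination_pos hα hβ ht).le

lemma pathWeight_antitoneOn (hα : 0 < α) (hβ : 0 < β) :
    AntitoneOn (pathWeight α β) (Set.Icc 0 1) := by
  intro s hs t ht hst
  rw [pathWeight, pathWeight,
    div_le_div_iff₀ (convex_combination_pos hα hβ ht) (convex_combination_pos hα hβ hs)]
  -- the cross-multiplied difference is `αβ(t - s)`
  nlinarith [mul_nonneg (mul_nonneg hα.le hβ.le) (sub_nonneg.2 hst)]

end PathWeight

lemma inv_diagonal_of_ne_zero {n : ℕ} {d : Fin n → ℝ} (hd : ∀ i, d i ≠ 0) :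
    (diagonal d)⁻¹ = diagonal fun i => (d i)⁻¹ := by
  refine inv_eq_right_inv ?_
  rw [diagonal_mul_diagonal, ← diagonal_one]
  exact congrArg diagonal (funext fun i => mul_inv_cancel₀ (hd i))

lemma mPath_diagonal_sub_apply {n : ℕ} (dA dB a b : Fin n → ℝ) {t : ℝ}
    (hd : ∀ i, t * dA i + (1 - t) * dB i ≠ 0) (i : Fin n) :
    (mPath (diagonal dA) (diagonal dB) a b t - a) i =
      pathWeight (dA i) (dB i) t * (b i - a i) := by
  have hM : t • diagonal dA + (1 - t) • diagonal dB
      = diagonal fun j => t * dA j + (1 - t) * dB j := by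
    rw [← diagonal_smul, ← diagonal_smul, diagonal_add]
    rfl
  simp only [mPath, hM, inv_diagonal_of_ne_zero hd, pathWeight, Pi.sub_apply, Pi.add_apply,
    Pi.smul_apply, mulVec_diagonal, smul_eq_mul]
  field_simp [hd i]
  ring

lemma matNorm_diagonal {n : ℕ} (d w : Fin n → ℝ) :
    matNorm (diagonal d) w = √(∑ i, d i * w i ^ 2) := by
  simp only [matNorm, dotProduct, mulVec_diagonal]
  congr 1
  exact Finset.sum_congr rfl fun i _ => by ring

lemma matNorm_diagonal_le_of_abs_le {n : ℕ} {d v w : Fin n → ℝ} (hd : ∀ i, 0 ≤ d i)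
    (hvw : ∀ i, |v i| ≤ |w i|) : matNorm (diagonal d) v ≤ matNorm (diagonal d) w := by
  rw [matNorm_diagonal, matNorm_diagonal]
  refine Real.sqrt_le_sqrt (Finset.sum_le_sum fun i _ => ?_)
  exact mul_le_mul_of_nonneg_left (sq_le_sq.2 (hvw i)) (hd i)

theorem mPath_stays_outside_A_general {n : ℕ}
    (A B : Matrix (Fin n) (Fin n) ℝ) (dA dB : Fin n → ℝ)
    (hA : A = Matrix.diagonal dA) (hB : B = Matrix.diagonal dB)
    (hdA : ∀ i, 0 < dA i) (hdB : ∀ i, 0 < dB i)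
    (a b : Fin n → ℝ)
    (ltil : ℝ) (h1 : ltil ≤ 1)
    (hout : 1 < matNorm A (mPath A B a b ltil - a)) :
    ∀ lam : ℝ, 0 ≤ lam → lam ≤ ltil → 1 < matNorm A (mPath A B a b lam - a) := by
  subst hA hB
  intro lam hl0 hl1
  have hlam : lam ∈ Set.Icc (0 : ℝ) 1 := ⟨hl0, hl1.trans h1⟩
  have hltil : ltil ∈ Set.Icc (0 : ℝ) 1 := ⟨hl0.trans hl1, h1⟩
  refine hout.trans_le (matNorm_diagonal_le_of_abs_le (fun i => (hdA i).le) fun i => ?_)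
  have hden : ∀ {t}, t ∈ Set.Icc (0 : ℝ) 1 → ∀ j, t * dA j + (1 - t) * dB j ≠ 0 :=
    fun ht j => (convex_combination_pos (hdA j) (hdB j) ht).ne'
  rw [mPath_diagonal_sub_apply dA dB a b (hden hltil),
    mPath_diagonal_sub_apply dA dB a b (hden hlam),
    abs_mul, abs_mul, abs_of_nonneg (pathWeight_nonneg (hdA i) (hdB i) hltil),
    abs_of_nonneg (pathWeight_nonneg (hdA i) (hdB i) hlam)]
  gcongr
  exact pathWeight_antitoneOn (hdA i) (hdB i) hlam hltil hl1

theorem mPath_stays_outside_A {n : ℕ} (hn : 0 < n)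
    (A B : Matrix (Fin n) (Fin n) ℝ) (dA dB : Fin n → ℝ)
    (hA : A = Matrix.diagonal dA) (hB : B = Matrix.diagonal dB)
    (hdA : ∀ i, 0 < dA i) (hdB : ∀ i, 0 < dB i)
    (a b : Fin n → ℝ)
    (ltil : ℝ) (h0 : 0 ≤ ltil) (h1 : ltil ≤ 1)
    (hout : 1 < matNorm A (mPath A B a b ltil - a)) :
    ∀ lam : ℝ, 0 ≤ lam → lam ≤ ltil → 1 < matNorm A (mPath A B a b lam - a) :=
  mPath_stays_outside_A_general A B dA dB hA hB hdA hdB a b ltil h1 hout
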